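/- Let γ = ((i₁ j₁),…,(i_k j_k)) ∈ Σ*_n(k). Then the elements j₁,…,j_k are pairwise distinct, and for every l ∈ {1,…,k}, j_l is a fixed point of γ_{l−1}, i.e. γ_{l−1}(j_l) = j_l. -/

import Mathlib

/-- ℓ(σ): the number of cycles (orbits) of σ, including fixed points, counted via the
minimal representative of each orbit. -/
noncomputable def cycleCount {n : ℕ} (σ : Equiv.Perm (Fin n)) : ℕ :=
  Set.ncard {x : Fin n | ∀ y, σ.SameCycle x y → x ≤ y}

/-- |σ| := n − ℓ(σ). -/
noncomputable def normPerm {n : ℕ} (σ : Equiv.Perm (Fin n)) : ℕ := n - cycleCount σ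

/-- σ₁ ≼ σ₂ iff |σ₂| = |σ₁| + |σ₁⁻¹σ₂|. -/
def precLe {n : ℕ} (σ₁ σ₂ : Equiv.Perm (Fin n)) : Prop :=
  normPerm σ₂ = normPerm σ₁ + normPerm (σ₁⁻¹ * σ₂)

/-- Σ_n(k): tuples of k transpositions with |τ₁⋯τ_k| = k and τ₁⋯τ_k ≼ (1 … n). -/
def SigmaSet (n k : ℕ) : Set (Fin k → Equiv.Perm (Fin n)) :=
  {τ | (∀ l, (τ l).IsSwap) ∧ normPerm (List.ofFn τ).prod = k ∧
      precLe (List.ofFn τ).prod (finRotate n)}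

/-- γ_m := τ₁∘⋯∘τ_m, the product of the first m entries of the chain. -/
def gammaP {n k : ℕ} (τ : Fin k → Equiv.Perm (Fin n)) (m : ℕ) : Equiv.Perm (Fin n) :=
  ((List.ofFn τ).take m).prod

/-!
Since `|γ_k| = k` and multiplying by a transposition changes `|·|` by exactly one, every step
`γ_{l+1} = γ_l (i_{l+1} j_{l+1})` merges two cycles of `γ_l`, and every `γ_l` lies below the
long cycle `c`. Below `c` every cycle has at most one descent: this holds for `c` and survives each
step down the interval, which splits a cycle. Now if `γ_{l-1}` moved `j_l`, then `j_l = j_m` for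
some `m < l` with `i_m < i_l`, and `i_m` lies in the cycle of `j_l`. The merged cycle of `γ_l` then
runs `j_l → ⋯ → i_l → ⋯ → i_m`, which descends twice. Injectivity follows, because `γ_l` already
moves `j_l` and the cycles only grow along the path.
-/

open Equiv

namespace Equiv.Perm

variable {α : Type*}

/-- Equivalently: every cycle of `σ`, read from its least element, is increasing. -/
def OneDescentPerCycle [LinearOrder α] (σ : Perm α) : Prop :=
  ∀ x y, σ.SameCycle x y → σ x < x → σ y < y → x = y

theorem exists_descent_of_pow_apply_lt [LinearOrder α] {σ : Perm α} {x : α} {s : ℕ}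
    (h : (σ ^ s) x < x) : ∃ t < s, σ ((σ ^ t) x) < (σ ^ t) x := by
  by_contra! hasc
  have hrun : ∀ t ≤ s, x ≤ (σ ^ t) x := by
    intro t ht
    induction t with
    | zero => simp
    | succ t ih => rw [pow_succ', mul_apply]; exact (ih (by omega)).trans (hasc t (by omega))
  exact (hrun s le_rfl).not_gt h

theorem OneDescentPerCycle.exists_pow_apply_eq_self [LinearOrder α] {ρ : Perm α}
    (hρ : ρ.OneDescentPerCycle) {x : α} {a b : ℕ} (ha : (ρ ^ a) x < x)
    (hb : (ρ ^ (a + b)) x < (ρ ^ a) x) :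
    ∃ t, 0 < t ∧ t < a + b ∧ (ρ ^ t) x = x := by
  obtain ⟨t₁, ht₁, hd₁⟩ := exists_descent_of_pow_apply_lt ha
  obtain ⟨t₂, ht₂, hd₂⟩ := exists_descent_of_pow_apply_lt (x := (ρ ^ a) x) (s := b)
    (by rwa [← mul_apply, ← pow_add, add_comm])
  rw [← mul_apply (ρ ^ t₂), ← pow_add] at hd₂
  have heq := hρ _ _ ((sameCycle_pow_left.2 (SameCycle.refl ρ x)).trans
    (sameCycle_pow_right.2 (SameCycle.refl ρ x))) hd₁ hd₂
  refine ⟨t₂ + a - t₁, by omega, by omega, (ρ ^ t₁).injective ?_⟩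
  rw [← mul_apply, ← pow_add, Nat.add_sub_cancel' (by omega), heq]

section Orbits

variable [Finite α] {σ : Perm α} {x y : α}

theorem SameCycle.mem_of_mapsTo {s : Set α} (hs : Set.MapsTo σ s s) (h : σ.SameCycle x y)
    (hx : x ∈ s) : y ∈ s := by
  obtain ⟨t, rfl⟩ := h.exists_nat_pow_eq
  rw [coe_pow]
  exact hs.iterate t hx

theorem SameCycle.exists_least_pow_eq (h : σ.SameCycle x y) :
    ∃ q, 0 < q ∧ (σ ^ q) x = y ∧ ∀ t, 0 < t → t < q → (σ ^ t) x ≠ y ∧ (σ ^ t) x ≠ x := by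
  classical
  have hex : ∃ q, 0 < q ∧ (σ ^ q) x = y := by
    obtain ⟨q, hq, -, hqy⟩ := h.exists_pow_eq''
    exact ⟨q, hq, hqy⟩
  set q := Nat.find hex
  obtain ⟨hq, hqy⟩ : 0 < q ∧ (σ ^ q) x = y := Nat.find_spec hex
  refine ⟨q, hq, hqy, fun t ht htq => ⟨fun hty => Nat.find_min hex htq ⟨ht, hty⟩, fun htx => ?_⟩⟩
  refine Nat.find_min hex (show q - t < q by omega) ⟨by omega, ?_⟩
  calc (σ ^ (q - t)) x = (σ ^ (q - t)) ((σ ^ t) x) := by rw [htx]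
    _ = (σ ^ q) x := by rw [← mul_apply, ← pow_add, Nat.sub_add_cancel htq.le]
    _ = y := hqy

end Orbits

section MulSwap

variable [DecidableEq α] {σ : Perm α} {u v x y : α}

theorem mul_swap_pow_apply {q : ℕ}
    (h : ∀ t, 0 < t → t < q → (σ ^ t) v ≠ u ∧ (σ ^ t) v ≠ v) :
    ∀ t, 0 < t → t ≤ q → ((σ * swap u v) ^ t) u = (σ ^ t) v := by
  intro t ht htq
  induction t with
  | zero => omega
  | succ t ih =>
    rcases Nat.eq_zero_or_pos t with rfl | ht'
    · simp
    · obtain ⟨hu, hv⟩ := h t ht' (by omega)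
      rw [pow_succ', mul_apply, ih ht' (by omega), mul_apply, swap_apply_of_ne_of_ne hu hv,
        ← mul_apply, ← pow_succ']

variable [Finite α]

theorem sameCycle_mul_swap_of_not_sameCycle (h : ¬σ.SameCycle u v) :
    (σ * swap u v).SameCycle u v := by
  obtain ⟨p, hp, hpv, hmin⟩ := (SameCycle.refl σ v).exists_least_pow_eq
  have hpath := mul_swap_pow_apply (u := u) (fun t ht htp =>
    ⟨fun htu => h (htu ▸ sameCycle_pow_right.2 (SameCycle.refl σ v)).symm, (hmin t ht htp).2⟩)
    p hp le_rfl
  exact ⟨p, by rw [zpow_natCast, hpath, hpv]⟩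

theorem SameCycle.mul_swap (hnot : ¬σ.SameCycle u v) (h : σ.SameCycle x y) :
    (σ * swap u v).SameCycle x y := by
  have hswap : ∀ z, (σ * swap u v).SameCycle z (swap u v z) := by
    intro z
    rw [swap_apply_def]
    split_ifs with hzu hzv
    · subst hzu; exact sameCycle_mul_swap_of_not_sameCycle hnot
    · subst hzv; exact (sameCycle_mul_swap_of_not_sameCycle hnot).symm
    · rfl
  refine h.mem_of_mapsTo (s := {z | (σ * swap u v).SameCycle x z}) (fun z hz => ?_) rfl
  have : σ z = (σ * swap u v) (swap u v z) := by simp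
  exact this ▸ hz.trans (sameCycle_apply_right.2 (hswap z))

theorem SameCycle.of_mul_swap (h : (σ * swap u v).SameCycle x y) :
    σ.SameCycle x y ∨
      (σ.SameCycle x u ∨ σ.SameCycle x v) ∧ (σ.SameCycle u y ∨ σ.SameCycle v y) := by
  let P : α → Prop := fun z => σ.SameCycle x z ∨
    (σ.SameCycle x u ∨ σ.SameCycle x v) ∧ (σ.SameCycle u z ∨ σ.SameCycle v z)
  have hxuv : ∀ {z}, P z → z = u ∨ z = v → σ.SameCycle x u ∨ σ.SameCycle x v := by
    rintro z (hz | ⟨hz, -⟩) (rfl | rfl)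
    exacts [Or.inl hz, Or.inr hz, hz, hz]
  have hswap : ∀ z, P z → P (swap u v z) := by
    intro z hz
    rw [swap_apply_def]
    split_ifs with hzu hzv
    · exact Or.inr ⟨hxuv hz (Or.inl hzu), Or.inr (SameCycle.refl σ v)⟩
    · exact Or.inr ⟨hxuv hz (Or.inr hzv), Or.inl (SameCycle.refl σ u)⟩
    · exact hz
  have hσ : ∀ z, P z → P (σ z) := by
    rintro z (hz | ⟨hxuv, hz⟩)
    · exact Or.inl (sameCycle_apply_right.2 hz)
    · exact Or.inr ⟨hxuv, hz.imp sameCycle_apply_right.2 sameCycle_apply_right.2⟩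
  exact h.mem_of_mapsTo (s := {z | P z}) (fun z hz => hσ (swap u v z) (hswap z hz))
    (Or.inl (SameCycle.refl σ x))

theorem SameCycle.of_mul_swap_of_sameCycle (h : (σ * swap u v).SameCycle x y)
    (huv : σ.SameCycle u v) : σ.SameCycle x y := by
  rcases h.of_mul_swap with h | ⟨hx | hx, hy | hy⟩
  · exact h
  · exact hx.trans hy
  · exact hx.trans (huv.trans hy)
  · exact hx.trans (huv.symm.trans hy)
  · exact hx.trans hy

theorem not_sameCycle_mul_swap (h : σ.SameCycle u v) (hne : u ≠ v) :
    ¬(σ * swap u v).SameCycle u v := by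
  obtain ⟨q, hq, hqu, hmin⟩ := h.symm.exists_least_pow_eq
  let arc : Set α := {z | ∃ t, 0 < t ∧ t ≤ q ∧ (σ ^ t) v = z}
  have hmaps : Set.MapsTo (σ * swap u v) arc arc := by
    rintro _ ⟨t, ht, htq, rfl⟩
    rcases htq.lt_or_eq with htq | rfl
    · obtain ⟨htu, htv⟩ := hmin t ht htq
      refine ⟨t + 1, by omega, htq, ?_⟩
      rw [mul_apply, swap_apply_of_ne_of_ne htu htv, ← mul_apply, ← pow_succ']
    · exact ⟨1, one_pos, hq, by rw [mul_apply, hqu, swap_apply_left, pow_one]⟩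
  intro huv
  obtain ⟨t, ht, htq, htv⟩ := huv.mem_of_mapsTo hmaps ⟨q, hq, le_rfl, hqu⟩
  rcases htq.lt_or_eq with htq | rfl
  · exact (hmin t ht htq).2 htv
  · exact hne (hqu.symm.trans htv)

end MulSwap

section Descents

variable [LinearOrder α] [Finite α] {ρ : Perm α}

theorem not_oneDescentPerCycle_mul_swap {σ : Perm α} {u v w : α} (hnot : ¬σ.SameCycle u v)
    (hvw : σ.SameCycle v w) (hwu : w < u) (huv : u < v) :
    ¬(σ * swap u v).OneDescentPerCycle := by
  intro hP
  obtain ⟨a, ha, hau, hamin⟩ := (SameCycle.refl σ u).exists_least_pow_eq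
  obtain ⟨b, hb, hbw, hbmin⟩ := hvw.exists_least_pow_eq
  -- the merged cycle runs `v → σ u → ⋯ → u → σ v → ⋯ → w` without passing `v` again
  have hpath₁ : ∀ t, 0 < t → t ≤ a → ((σ * swap u v) ^ t) v = (σ ^ t) u := by
    rw [swap_comm]
    exact mul_swap_pow_apply fun t ht hta => ⟨fun htv =>
      hnot (htv ▸ sameCycle_pow_right.2 (SameCycle.refl σ u)), (hamin t ht hta).2⟩
  have hpath₂ : ∀ t, 0 < t → t ≤ b → ((σ * swap u v) ^ t) u = (σ ^ t) v :=
    mul_swap_pow_apply fun t ht htb => ⟨fun htu =>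
      hnot (htu ▸ sameCycle_pow_right.2 (SameCycle.refl σ v)).symm, (hbmin t ht htb).2⟩
  have hva : ((σ * swap u v) ^ a) v = u := (hpath₁ a ha le_rfl).trans hau
  have hvab : ((σ * swap u v) ^ (a + b)) v = w := by
    rw [add_comm, pow_add, mul_apply, hva, hpath₂ b hb le_rfl, hbw]
  obtain ⟨t, ht, htab, htv⟩ := hP.exists_pow_apply_eq_self (x := v) (a := a) (b := b)
    (by rwa [hva]) (by rwa [hvab, hva])
  rcases le_or_gt t a with hta | hta
  · rw [hpath₁ t ht hta] at htv
    exact hnot (htv ▸ sameCycle_pow_right.2 (SameCycle.refl σ u))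
  · rw [show t = (t - a) + a by omega, pow_add, mul_apply, hva,
      hpath₂ (t - a) (by omega) (by omega)] at htv
    exact (hbmin (t - a) (by omega) (by omega)).2 htv

theorem OneDescentPerCycle.eq_of_mul_swap (hρ : ρ.OneDescentPerCycle) {u v y : α} (hne : u ≠ v)
    (huv : ρ.SameCycle u v) (hu : (ρ * swap u v) u < u) (huy : (ρ * swap u v).SameCycle u y)
    (hy : (ρ * swap u v) y < y) : y = u := by
  by_contra hyu
  have hnot : ¬(ρ * swap u v).SameCycle u v := not_sameCycle_mul_swap huv hne
  have hyv : y ≠ v := fun h => hnot (h ▸ huy)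
  rw [mul_apply, swap_apply_of_ne_of_ne hyu hyv] at hy
  have hρuy : ρ.SameCycle u y := huy.of_mul_swap_of_sameCycle huv
  obtain ⟨r, hr, hrv, hrmin⟩ := huv.exists_least_pow_eq
  have hpath : ∀ t, 0 < t → t ≤ r → ((ρ * swap u v) ^ t) v = (ρ ^ t) u := by
    rw [swap_comm]
    exact mul_swap_pow_apply hrmin
  -- the `ρ`-path from `u` to `v` lies in the new cycle of `v`: it misses `y`, so it ascends
  have hle : u ≤ v := by
    by_contra! hvu
    obtain ⟨t, htr, hdt⟩ := exists_descent_of_pow_apply_lt (σ := ρ) (x := u) (s := r)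
      (by rwa [hrv])
    have hty : (ρ ^ t) u = y :=
      hρ _ _ ((sameCycle_pow_left.2 (SameCycle.refl ρ u)).trans hρuy) hdt hy
    rcases Nat.eq_zero_or_pos t with rfl | ht
    · exact hyu (by simpa using hty.symm)
    · rw [← hpath t ht htr.le] at hty
      exact hnot (huy.trans (hty ▸ sameCycle_pow_right.2 (SameCycle.refl _ v)).symm)
  have hv : v ≤ ρ v := by
    by_contra! hv
    exact hyv (hρ _ _ (huv.symm.trans hρuy) hv hy).symm
  rw [mul_apply, swap_apply_left] at hu
  exact (hle.trans hv).not_gt hu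

theorem OneDescentPerCycle.mul_swap (hρ : ρ.OneDescentPerCycle) {u v : α} (hne : u ≠ v)
    (huv : ρ.SameCycle u v) : (ρ * swap u v).OneDescentPerCycle := by
  have hu : ∀ z, (ρ * swap u v).SameCycle u z → (ρ * swap u v) z < z →
      (ρ * swap u v) u < u → z = u :=
    fun z hz hdz hdu => hρ.eq_of_mul_swap hne huv hdu hz hdz
  have hv : ∀ z, (ρ * swap u v).SameCycle v z → (ρ * swap u v) z < z →
      (ρ * swap u v) v < v → z = v := by
    rw [swap_comm]
    exact fun z hz hdz hdv => hρ.eq_of_mul_swap hne.symm huv.symm hdv hz hdz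
  intro x y hxy hx hy
  by_cases hxu : x = u
  · subst hxu; exact (hu y hxy hy hx).symm
  by_cases hxv : x = v
  · subst hxv; exact (hv y hxy hy hx).symm
  by_cases hyu : y = u
  · subst hyu; exact hu x hxy.symm hx hy
  by_cases hyv : y = v
  · subst hyv; exact hv x hxy.symm hx hy
  rw [mul_apply, swap_apply_of_ne_of_ne hxu hxv] at hx
  rw [mul_apply, swap_apply_of_ne_of_ne hyu hyv] at hy
  exact hρ x y (hxy.of_mul_swap_of_sameCycle huv) hx hy

end Descents

end Equiv.Perm

open Equiv.Perm

section CycleCount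

variable {n : ℕ} {σ : Perm (Fin n)} {u v : Fin n}

def cycleMins (σ : Perm (Fin n)) : Set (Fin n) := {x | ∀ y, σ.SameCycle x y → x ≤ y}

theorem cycleCount_eq_ncard_cycleMins (σ : Perm (Fin n)) :
    cycleCount σ = (cycleMins σ).ncard := rfl

theorem exists_sameCycle_mem_cycleMins (σ : Perm (Fin n)) (x : Fin n) :
    ∃ a, σ.SameCycle x a ∧ a ∈ cycleMins σ := by
  obtain ⟨a, ha, hmin⟩ := Set.exists_min_image {y | σ.SameCycle x y} id (Set.toFinite _)
    ⟨x, SameCycle.refl σ x⟩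
  exact ⟨a, ha, fun y hy => hmin y (ha.trans hy)⟩

theorem Equiv.Perm.SameCycle.eq_of_mem_cycleMins {a b : Fin n} (h : σ.SameCycle a b)
    (ha : a ∈ cycleMins σ) (hb : b ∈ cycleMins σ) : a = b :=
  le_antisymm (ha b h) (hb a h.symm)

theorem cycleMins_mul_swap {a b : Fin n} (hnot : ¬σ.SameCycle u v) (hua : σ.SameCycle u a)
    (ha : a ∈ cycleMins σ) (hvb : σ.SameCycle v b) (hb : b ∈ cycleMins σ) (hab : a < b) :
    cycleMins (σ * swap u v) = cycleMins σ \ {b} := by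
  ext x
  constructor
  · intro hx
    refine ⟨fun y hy => hx y (hy.mul_swap hnot), fun hxb => ?_⟩
    rw [Set.mem_singleton_iff] at hxb
    subst hxb
    have hxa : (σ * swap u v).SameCycle x a := (hvb.symm.mul_swap hnot).trans
      ((sameCycle_mul_swap_of_not_sameCycle hnot).symm.trans (hua.mul_swap hnot))
    exact (hx a hxa).not_gt hab
  · rintro ⟨hx, hxb⟩ y hy
    rcases hy.of_mul_swap with hy | ⟨hxuv, hy⟩
    · exact hx y hy
    have hxa : x = a := by
      rcases hxuv with hxu | hxv
      · exact (hxu.trans hua).eq_of_mem_cycleMins hx ha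
      · exact absurd ((hxv.trans hvb).eq_of_mem_cycleMins hx hb) hxb
    subst hxa
    rcases hy with hy | hy
    · exact ha y (hua.symm.trans hy)
    · exact hab.le.trans (hb y (hvb.symm.trans hy))

theorem cycleCount_le (σ : Perm (Fin n)) : cycleCount σ ≤ n :=
  (Set.ncard_le_card _).trans_eq (Nat.card_fin n)

theorem cycleCount_one : cycleCount (1 : Perm (Fin n)) = n := by
  have : cycleMins (1 : Perm (Fin n)) = Set.univ :=
    Set.eq_univ_of_forall fun x y hy => (sameCycle_one.1 hy).le
  rw [cycleCount_eq_ncard_cycleMins, this, Set.ncard_univ, Nat.card_fin]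

theorem cycleCount_mul_swap_of_not_sameCycle (hnot : ¬σ.SameCycle u v) :
    cycleCount (σ * swap u v) + 1 = cycleCount σ := by
  obtain ⟨a, hua, ha⟩ := exists_sameCycle_mem_cycleMins σ u
  obtain ⟨b, hvb, hb⟩ := exists_sameCycle_mem_cycleMins σ v
  have hab : a ≠ b := by
    rintro rfl
    exact hnot (hua.trans hvb.symm)
  rw [cycleCount_eq_ncard_cycleMins, cycleCount_eq_ncard_cycleMins]
  rcases hab.lt_or_gt with hab | hba
  · rw [cycleMins_mul_swap hnot hua ha hvb hb hab]
    exact Set.ncard_sdiff_singleton_add_one hb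
  · rw [swap_comm, cycleMins_mul_swap (fun h => hnot h.symm) hvb hb hua ha hba]
    exact Set.ncard_sdiff_singleton_add_one ha

theorem cycleCount_mul_swap_of_sameCycle (h : σ.SameCycle u v) (hne : u ≠ v) :
    cycleCount (σ * swap u v) = cycleCount σ + 1 := by
  have := cycleCount_mul_swap_of_not_sameCycle (not_sameCycle_mul_swap h hne)
  rwa [mul_swap_mul_self, eq_comm] at this

end CycleCount

section NormPerm

variable {n : ℕ} {σ : Perm (Fin n)} {u v : Fin n}

theorem normPerm_one : normPerm (1 : Perm (Fin n)) = 0 := by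
  simp [normPerm, cycleCount_one]

theorem normPerm_mul_swap_of_not_sameCycle (hnot : ¬σ.SameCycle u v) :
    normPerm (σ * swap u v) = normPerm σ + 1 := by
  have := cycleCount_mul_swap_of_not_sameCycle hnot
  have := cycleCount_le σ
  unfold normPerm
  omega

theorem normPerm_mul_swap_of_sameCycle (h : σ.SameCycle u v) (hne : u ≠ v) :
    normPerm (σ * swap u v) + 1 = normPerm σ := by
  have := cycleCount_mul_swap_of_sameCycle h hne
  have := cycleCount_le (σ * swap u v)
  unfold normPerm
  omega

theorem normPerm_mul_swap_le (σ : Perm (Fin n)) (u v : Fin n) :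
    normPerm (σ * swap u v) ≤ normPerm σ + 1 := by
  by_cases h : σ.SameCycle u v
  · rcases eq_or_ne u v with rfl | hne
    · rw [swap_self, ← Perm.one_def, mul_one]
      omega
    · have := normPerm_mul_swap_of_sameCycle h hne
      omega
  · rw [normPerm_mul_swap_of_not_sameCycle h]

theorem normPerm_mul_le (σ ρ : Perm (Fin n)) : normPerm (σ * ρ) ≤ normPerm σ + normPerm ρ := by
  induction hN : normPerm ρ using Nat.strong_induction_on generalizing ρ with
  | _ N ih =>
    by_cases hρ : ρ = 1
    · simp [hρ]
    obtain ⟨x, hx⟩ : ∃ x, ρ x ≠ x := not_forall.1 fun h => hρ (Equiv.ext h)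
    have hsplit := normPerm_mul_swap_of_sameCycle
      (sameCycle_apply_right.2 (SameCycle.refl ρ x)) (Ne.symm hx)
    have hρ' := ih _ (by omega) (ρ * swap x (ρ x)) rfl
    have hlast := normPerm_mul_swap_le (σ * ρ * swap x (ρ x)) x (ρ x)
    rw [mul_swap_mul_self] at hlast
    rw [← mul_assoc] at hρ'
    omega

theorem normPerm_prod_le_length (L : List (Perm (Fin n))) (hL : ∀ τ ∈ L, τ.IsSwap) :
    normPerm L.prod ≤ L.length := by
  induction L with
  | nil => simp [normPerm_one]
  | cons τ L ih =>
    obtain ⟨u, v, -, rfl⟩ := hL τ List.mem_cons_self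
    have hswap : normPerm (swap u v) ≤ 1 := by
      simpa [normPerm_one] using normPerm_mul_swap_le 1 u v
    have := normPerm_mul_le (swap u v) L.prod
    have := ih fun τ hτ => hL τ (List.mem_cons_of_mem _ hτ)
    rw [List.prod_cons, List.length_cons]
    omega

end NormPerm

section PrecLe

variable {n : ℕ}

theorem precLe_trans {σ τ π : Perm (Fin n)} (h₁ : precLe σ τ) (h₂ : precLe τ π) :
    precLe σ π := by
  have h₃ := normPerm_mul_le σ (σ⁻¹ * π)
  have h₄ := normPerm_mul_le (σ⁻¹ * τ) (τ⁻¹ * π)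
  rw [mul_inv_cancel_left] at h₃
  rw [show σ⁻¹ * τ * (τ⁻¹ * π) = σ⁻¹ * π by group] at h₄
  unfold precLe at *
  omega

theorem precLe_take_prod (L : List (Perm (Fin n))) (hL : ∀ τ ∈ L, τ.IsSwap)
    (hred : normPerm L.prod = L.length) (m : ℕ) :
    normPerm (L.take m).prod = (L.take m).length ∧ precLe (L.take m).prod L.prod := by
  have hdrop : (L.take m).prod⁻¹ * L.prod = (L.drop m).prod := by
    rw [← List.prod_take_mul_prod_drop L m, inv_mul_cancel_left]
  have h₁ := normPerm_prod_le_length (L.take m) fun τ hτ => hL τ (List.mem_of_mem_take hτ)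
  have h₂ := normPerm_prod_le_length (L.drop m) fun τ hτ => hL τ (List.mem_of_mem_drop hτ)
  have h₃ := normPerm_mul_le (L.take m).prod (L.drop m).prod
  have hlen : (L.take m).length + (L.drop m).length = L.length := by
    simp only [List.length_take, List.length_drop]
    omega
  rw [List.prod_take_mul_prod_drop] at h₃
  unfold precLe
  rw [hdrop]
  omega

theorem exists_mul_swap_precLe_of_precLe {σ π : Perm (Fin n)} (h : precLe σ π) (hσπ : σ ≠ π) :
    ∃ u v, u ≠ v ∧ ¬σ.SameCycle u v ∧ precLe (σ * swap u v) π ∧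
      normPerm ((σ * swap u v)⁻¹ * π) < normPerm (σ⁻¹ * π) := by
  unfold precLe at h
  obtain ⟨g, hg⟩ : ∃ g, σ⁻¹ * π = g := ⟨_, rfl⟩
  rw [hg] at h ⊢
  obtain ⟨x, hx⟩ : ∃ x, g x ≠ x :=
    not_forall.1 fun h => hσπ (inv_mul_eq_one.1 (hg.trans (Equiv.ext h)))
  have hne : g x ≠ g (g x) := g.injective.ne (Ne.symm hx)
  -- `swap (g x) (g (g x)) * g = g * swap x (g x)` splits a cycle of `g`
  have hsplit : normPerm (swap (g x) (g (g x)) * g) + 1 = normPerm g := by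
    rw [← mul_swap_eq_swap_mul]
    exact normPerm_mul_swap_of_sameCycle (sameCycle_apply_right.2 (SameCycle.refl g x))
      (Ne.symm hx)
  have hρg : (σ * swap (g x) (g (g x)))⁻¹ * π = swap (g x) (g (g x)) * g := by
    rw [mul_inv_rev, swap_inv, mul_assoc, hg]
  have htri := normPerm_mul_le (σ * swap (g x) (g (g x))) ((σ * swap (g x) (g (g x)))⁻¹ * π)
  rw [mul_inv_cancel_left, hρg] at htri
  have hle := normPerm_mul_swap_le σ (g x) (g (g x))
  refine ⟨g x, g (g x), hne, fun hsc => ?_, ?_, by rw [hρg]; omega⟩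
  · have := normPerm_mul_swap_of_sameCycle hsc hne
    omega
  · unfold precLe
    rw [hρg]
    omega

theorem Equiv.Perm.OneDescentPerCycle.of_precLe {σ π : Perm (Fin n)}
    (hπ : π.OneDescentPerCycle) (h : precLe σ π) : σ.OneDescentPerCycle := by
  induction hN : normPerm (σ⁻¹ * π) using Nat.strong_induction_on generalizing σ with
  | _ N ih =>
    by_cases hσπ : σ = π
    · rwa [hσπ]
    obtain ⟨u, v, hne, hnot, hρπ, hlt⟩ := exists_mul_swap_precLe_of_precLe h hσπ
    have := (ih _ (hN ▸ hlt) hρπ rfl).mul_swap hne (sameCycle_mul_swap_of_not_sameCycle hnot)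
    rwa [mul_swap_mul_self] at this

theorem oneDescentPerCycle_finRotate (n : ℕ) : (finRotate n).OneDescentPerCycle := by
  rcases n with _ | n
  · intro x
    exact x.elim0
  · have hlast : ∀ z : Fin (n + 1), finRotate _ z < z → z = Fin.last n := fun z hz =>
      not_not.1 fun h => hz.not_gt ((lt_finRotate_iff_ne_last z).2 h)
    intro x y _ hx hy
    rw [hlast x hx, hlast y hy]

end PrecLe

section Chain

variable {n k : ℕ}

theorem gammaP_zero (τ : Fin k → Perm (Fin n)) : gammaP τ 0 = 1 := by
  simp [gammaP]

theorem gammaP_succ (τ : Fin k → Perm (Fin n)) (l : Fin k) :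
    gammaP τ (l + 1) = gammaP τ l * τ l := by
  simp only [gammaP]
  rw [List.prod_take_succ _ _ (by simp)]
  simp

theorem exists_apply_ne_of_gammaP_apply_ne (τ : Fin k → Perm (Fin n)) {m : ℕ} (hm : m ≤ k)
    {x : Fin n} (h : gammaP τ m x ≠ x) : ∃ l : Fin k, (l : ℕ) < m ∧ τ l x ≠ x := by
  induction m with
  | zero => simp [gammaP_zero] at h
  | succ m ih =>
    by_cases hx : gammaP τ m x = x
    · refine ⟨⟨m, hm⟩, Nat.lt_succ_self m, fun hτ => h ?_⟩
      rw [(gammaP_succ τ ⟨m, hm⟩ : gammaP τ (m + 1) = _), mul_apply, hτ, hx]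
    · obtain ⟨l, hl, hτ⟩ := ih (by omega) hx
      exact ⟨l, by omega, hτ⟩

theorem normPerm_gammaP_of_mem_sigmaSet {τ : Fin k → Perm (Fin n)} (hτ : τ ∈ SigmaSet n k)
    {m : ℕ} (hm : m ≤ k) : normPerm (gammaP τ m) = m := by
  obtain ⟨hswap, hred, -⟩ := hτ
  have := (precLe_take_prod (List.ofFn τ) (List.forall_mem_ofFn_iff.2 hswap)
    (by rw [hred, List.length_ofFn]) m).1
  simpa [gammaP, hm] using this

theorem oneDescentPerCycle_gammaP_of_mem_sigmaSet {τ : Fin k → Perm (Fin n)}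
    (hτ : τ ∈ SigmaSet n k) (m : ℕ) : (gammaP τ m).OneDescentPerCycle := by
  obtain ⟨hswap, hred, hc⟩ := hτ
  have := (precLe_take_prod (List.ofFn τ) (List.forall_mem_ofFn_iff.2 hswap)
    (by rw [hred, List.length_ofFn]) m).2
  exact (oneDescentPerCycle_finRotate n).of_precLe (precLe_trans this hc)

variable {i j : Fin k → Fin n}

local notation "γ" => gammaP (fun m => swap (i m) (j m))

theorem not_sameCycle_gammaP_of_mem_sigmaSet (hγ : (fun m => swap (i m) (j m)) ∈ SigmaSet n k)
    (l : Fin k) : ¬(γ l).SameCycle (i l) (j l) := by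
  intro hsc
  have hne : i l ≠ j l := swap_isSwap_iff.1 (hγ.1 l)
  have := normPerm_mul_swap_of_sameCycle hsc hne
  rw [← gammaP_succ, normPerm_gammaP_of_mem_sigmaSet hγ l.isLt,
    normPerm_gammaP_of_mem_sigmaSet hγ l.isLt.le] at this
  omega

theorem gammaP_sameCycle_mono (hmerge : ∀ l : Fin k, ¬(γ l).SameCycle (i l) (j l))
    {m m' : ℕ} (hmm' : m ≤ m') (hm' : m' ≤ k) {x y : Fin n} (h : (γ m).SameCycle x y) :
    (γ m').SameCycle x y := by
  induction m', hmm' using Nat.le_induction with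
  | base => exact h
  | succ m' hmm' ih =>
    rw [(gammaP_succ _ ⟨m', hm'⟩ : γ (m' + 1) = _)]
    exact (ih (by omega)).mul_swap (hmerge ⟨m', hm'⟩)

theorem sameCycle_gammaP_succ (hmerge : ∀ l : Fin k, ¬(γ l).SameCycle (i l) (j l))
    (l : Fin k) : (γ (l + 1)).SameCycle (i l) (j l) := by
  rw [gammaP_succ]
  exact sameCycle_mul_swap_of_not_sameCycle (hmerge l)

theorem gammaP_apply_snd (hij : ∀ l, i l < j l) (hmono : Monotone i)
    (hmerge : ∀ l : Fin k, ¬(γ l).SameCycle (i l) (j l))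
    (hP : ∀ l : Fin k, (γ (l + 1)).OneDescentPerCycle) (l : Fin k) : γ l (j l) = j l := by
  by_contra hmoved
  obtain ⟨m, hml, hm⟩ := exists_apply_ne_of_gammaP_apply_ne _ l.isLt.le hmoved
  have hjm : j l = j m := by
    by_contra hjm
    exact hm (swap_apply_of_ne_of_ne ((hmono hml.le).trans_lt (hij l)).ne' hjm)
  have hsc : (γ l).SameCycle (i m) (j l) :=
    hjm ▸ gammaP_sameCycle_mono hmerge hml l.isLt.le (sameCycle_gammaP_succ hmerge m)
  have hlt : i m < i l := (hmono hml.le).lt_of_ne fun h => hmerge l (h ▸ hsc)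
  refine not_oneDescentPerCycle_mul_swap (hmerge l) hsc.symm hlt (hij l) ?_
  rw [← gammaP_succ]
  exact hP l

theorem injective_of_gammaP_apply_snd (hmerge : ∀ l : Fin k, ¬(γ l).SameCycle (i l) (j l))
    (hfix : ∀ l : Fin k, γ l (j l) = j l) : Function.Injective j := by
  intro l₁ l₂ h
  wlog hlt : l₁ < l₂ generalizing l₁ l₂
  · rcases (not_lt.1 hlt).lt_or_eq with hgt | heq
    · exact (this h.symm hgt).symm
    · exact heq.symm
  have hsc : (γ l₂).SameCycle (j l₁) (i l₁) :=
    (gammaP_sameCycle_mono hmerge hlt l₂.isLt.le (sameCycle_gammaP_succ hmerge l₁)).symm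
  exact (hmerge l₁ (by rw [← hsc.eq_of_left (h ▸ hfix l₂)])).elim

end Chain

/-- For a non-decreasing path γ = ((i₁ j₁),…,(i_k j_k)) ∈ Σ*_n(k), the j₁,…,j_k are pairwise
distinct and each j_l is a fixed point of γ_{l−1}. -/
theorem stmt11 (n k : ℕ) (i j : Fin k → Fin n) (hij : ∀ l, i l < j l)
    (hmono : Monotone i)
    (hγ : (fun l => Equiv.swap (i l) (j l)) ∈ SigmaSet n k) :
    Function.Injective j ∧
      ∀ l : Fin k, gammaP (fun m => Equiv.swap (i m) (j m)) (l : ℕ) (j l) = j l := by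
  have hmerge := not_sameCycle_gammaP_of_mem_sigmaSet hγ
  have hfix := gammaP_apply_snd hij hmono hmerge
    fun l => oneDescentPerCycle_gammaP_of_mem_sigmaSet hγ _
  exact ⟨injective_of_gammaP_apply_snd hmerge hfix, hfix⟩
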